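/- arXiv:2011.02178 — 5 statements merged into one kernel-verified Lean document; each statement's English description precedes it below -/
import Mathlib

section
/- Let ω : [0,∞) → [0,∞) be increasing, let K > 1, r ∈ (0,1), C > 0, and suppose ∫₁^∞ ω(tu)/u^{1+r} du ≤ C·(σ(t)+1) for all t > 0. Then for all t > 0 and all integers j ≥ 0, ω(Kʲ t)/K^{rj} ≤ C·(K^{1+r}/(K−1))·(σ(t)+1). In particular, setting H := K^r, there is a constant C' such that ω(Kʲ t) ≤ C'·Hʲ·(σ(t)+1) for all t > 0 and j ≥ 1. -/
open MeasureTheory Set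

/-!
On the interval `(a, K a]` the integrand `ω (t u) / u ^ p` is at least `ω (t a) / (K a) ^ p`,
by monotonicity of `ω`; since the interval has length `(K - 1) a` and the integrand is
nonnegative on `(1, ∞)`, the whole integral dominates `ω (t a) (K - 1) / (K ^ p a ^ (p - 1))`.
Taking `a = K ^ j` and `p = 1 + r` gives the bound.
-/

theorem mul_sub_le_setIntegral_of_le_on_Ioc {g : ℝ → ℝ} {s : Set ℝ} {a b c : ℝ}
    (hab : a ≤ b) (hs : Ioc a b ⊆ s) (hg : IntegrableOn g s)
    (hg0 : 0 ≤ᵐ[volume.restrict s] g) (hc : ∀ u ∈ Ioc a b, c ≤ g u) :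
    c * (b - a) ≤ ∫ u in s, g u := by
  calc c * (b - a) ≤ ∫ u in Ioc a b, g u := by
        have := setIntegral_ge_of_const_le measurableSet_Ioc
          (by simp [Real.volume_Ioc]) hc (hg.mono_set hs)
        rwa [Real.volume_real_Ioc_of_le hab, smul_eq_mul, mul_comm] at this
    _ ≤ ∫ u in s, g u := setIntegral_mono_set hg hg0 hs.eventuallyLE

theorem div_rpow_sub_one_le_mul_setIntegral_Ioi_one {ω : ℝ → ℝ}
    (hmono : MonotoneOn ω (Ici 0)) (hpos : ∀ t ≥ (0:ℝ), 0 ≤ ω t) {t a K p : ℝ}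
    (ht : 0 < t) (ha : 1 ≤ a) (hK : 1 < K) (hp : 0 ≤ p)
    (hint : IntegrableOn (fun u => ω (t * u) / u ^ p) (Ioi 1)) :
    ω (t * a) / a ^ (p - 1) ≤ K ^ p / (K - 1) * ∫ u in Ioi (1:ℝ), ω (t * u) / u ^ p := by
  have ha0 : 0 < a := by linarith
  have hK0 : 0 < K := by linarith
  have hK1 : 0 < K - 1 := by linarith
  have hnonneg : 0 ≤ᵐ[volume.restrict (Ioi (1:ℝ))] fun u => ω (t * u) / u ^ p := by
    filter_upwards [ae_restrict_mem measurableSet_Ioi] with u (hu : 1 < u)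
    exact div_nonneg (hpos _ (by positivity)) (Real.rpow_nonneg (by linarith) _)
  have hle : ∀ u ∈ Ioc a (K * a), ω (t * a) / (K * a) ^ p ≤ ω (t * u) / u ^ p := by
    rintro u ⟨hau, huKa⟩
    have hu0 : 0 < u := ha0.trans hau
    exact div_le_div₀ (hpos _ (by positivity))
      (hmono (mem_Ici.mpr (by positivity)) (mem_Ici.mpr (by positivity)) (by gcongr))
      (by positivity) (Real.rpow_le_rpow hu0.le huKa hp)
  have hint_ge := mul_sub_le_setIntegral_of_le_on_Ioc (s := Ioi 1) (by nlinarith)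
    (fun u hu => ha.trans_lt hu.1) hint hnonneg hle
  have hpow : (K * a) ^ p = K ^ p * a ^ (p - 1) * a := by
    rw [Real.mul_rpow hK0.le ha0.le, Real.rpow_sub_one ha0.ne']
    field_simp
  rw [hpow] at hint_ge
  rw [div_mul_eq_mul_div, le_div_iff₀ hK1]
  calc ω (t * a) / a ^ (p - 1) * (K - 1)
      = K ^ p * (ω (t * a) / (K ^ p * a ^ (p - 1) * a) * (K * a - a)) := by
        field_simp
    _ ≤ K ^ p * ∫ u in Ioi (1:ℝ), ω (t * u) / u ^ p := by gcongr

theorem stmt2_general (ω σ : ℝ → ℝ) (hmono : MonotoneOn ω (Ici 0))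
    (hpos : ∀ t ≥ (0:ℝ), 0 ≤ ω t)
    (K r C : ℝ) (hK : 1 < K) (hr0 : 0 < r) (hC : 0 < C)
    (hint : ∀ t > (0:ℝ), IntegrableOn (fun u => ω (t * u) / u ^ (1 + r)) (Ioi 1))
    (hbd : ∀ t > (0:ℝ), ∫ u in Ioi (1:ℝ), ω (t * u) / u ^ (1 + r) ≤ C * (σ t + 1)) :
    (∀ t > (0:ℝ), ∀ j : ℕ,
        ω (K ^ j * t) / K ^ (r * j) ≤ C * (K ^ (1 + r) / (K - 1)) * (σ t + 1)) ∧
    ∃ C' > (0:ℝ), ∀ t > (0:ℝ), ∀ j : ℕ, 1 ≤ j →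
        ω (K ^ j * t) ≤ C' * (K ^ r) ^ j * (σ t + 1) := by
  have hK0 : 0 < K := by linarith
  have hK1 : 0 < K - 1 := by linarith
  have main : ∀ t > (0:ℝ), ∀ j : ℕ,
      ω (K ^ j * t) / K ^ (r * j) ≤ C * (K ^ (1 + r) / (K - 1)) * (σ t + 1) := by
    intro t ht j
    have hKj : K ^ (r * j) = (K ^ j : ℝ) ^ (1 + r - 1) := by
      rw [add_sub_cancel_left, ← Real.rpow_natCast, ← Real.rpow_mul hK0.le, mul_comm]
    calc ω (K ^ j * t) / K ^ (r * j) = ω (t * K ^ j) / (K ^ j : ℝ) ^ (1 + r - 1) := by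
          rw [hKj, mul_comm]
      _ ≤ K ^ (1 + r) / (K - 1) * ∫ u in Ioi (1:ℝ), ω (t * u) / u ^ (1 + r) :=
          div_rpow_sub_one_le_mul_setIntegral_Ioi_one hmono hpos ht (one_le_pow₀ hK.le) hK
            (by linarith) (hint t ht)
      _ ≤ K ^ (1 + r) / (K - 1) * (C * (σ t + 1)) := by gcongr; exact hbd t ht
      _ = C * (K ^ (1 + r) / (K - 1)) * (σ t + 1) := by ring
  refine ⟨main, C * (K ^ (1 + r) / (K - 1)), by positivity, fun t ht j _ => ?_⟩
  have h := main t ht j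
  rw [div_le_iff₀ (by positivity), Real.rpow_mul hK0.le, Real.rpow_natCast] at h
  linarith

theorem stmt2 (ω σ : ℝ → ℝ) (hmono : MonotoneOn ω (Ici 0))
    (hpos : ∀ t ≥ (0:ℝ), 0 ≤ ω t)
    (K r C : ℝ) (hK : 1 < K) (hr0 : 0 < r) (hr1 : r < 1) (hC : 0 < C)
    (hint : ∀ t > (0:ℝ), IntegrableOn (fun u => ω (t * u) / u ^ (1 + r)) (Ioi 1))
    (hbd : ∀ t > (0:ℝ), ∫ u in Ioi (1:ℝ), ω (t * u) / u ^ (1 + r) ≤ C * (σ t + 1)) :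
    (∀ t > (0:ℝ), ∀ j : ℕ,
        ω (K ^ j * t) / K ^ (r * j) ≤ C * (K ^ (1 + r) / (K - 1)) * (σ t + 1)) ∧
    ∃ C' > (0:ℝ), ∀ t > (0:ℝ), ∀ j : ℕ, 1 ≤ j →
        ω (K ^ j * t) ≤ C' * (K ^ r) ^ j * (σ t + 1) :=
  stmt2_general ω σ hmono hpos K r C hK hr0 hC hint hbd
end

section
/- Let ω : [0,∞) → [0,∞) be concave with ω(0)=0, and suppose t ↦ ω(eᵗ) is convex. Then ω is differentiable on (0,∞) and ω' is continuous on (0,∞), i.e., ω is of class C¹ on (0,∞). -/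
/-! Concavity of `ω` gives one-sided derivatives at each `t > 0` with `ω'₊(t) ≤ ω'₋(t)`, while
convexity of `ω ∘ exp` at `log t` gives, by the chain rule, `t ω'₋(t) ≤ t ω'₊(t)`; so `ω` is
differentiable. Then `ω'` is antitone, and `t ω'(t) = (ω ∘ exp)'(log t)` is monotone: together
these squeeze `ω'(t)` between `ω'(t₀)` and `t₀ ω'(t₀) / t`, which forces continuity at `t₀`. -/

open Set

lemma hasDerivAt_of_hasDerivWithinAt_Iio_Ioi {f : ℝ → ℝ} {f' x : ℝ}
    (hl : HasDerivWithinAt f f' (Iio x) x) (hr : HasDerivWithinAt f f' (Ioi x) x) :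
    HasDerivAt f f' x := by
  rw [hasDerivAt_iff_tendsto_slope_left_right]
  exact ⟨(hasDerivWithinAt_iff_tendsto_slope' self_notMem_Iio).1 hl,
    (hasDerivWithinAt_iff_tendsto_slope' self_notMem_Ioi).1 hr⟩

lemma HasDerivWithinAt.comp_exp_Iio {f : ℝ → ℝ} {f' a : ℝ}
    (hf : HasDerivWithinAt f f' (Iio (Real.exp a)) (Real.exp a)) :
    HasDerivWithinAt (fun s => f (Real.exp s)) (f' * Real.exp a) (Iio a) a :=
  hf.comp a (Real.hasDerivAt_exp a).hasDerivWithinAt fun _ hs => Real.exp_lt_exp.2 hs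

lemma HasDerivWithinAt.comp_exp_Ioi {f : ℝ → ℝ} {f' a : ℝ}
    (hf : HasDerivWithinAt f f' (Ioi (Real.exp a)) (Real.exp a)) :
    HasDerivWithinAt (fun s => f (Real.exp s)) (f' * Real.exp a) (Ioi a) a :=
  hf.comp a (Real.hasDerivAt_exp a).hasDerivWithinAt fun _ hs => Real.exp_lt_exp.2 hs

theorem ConcaveOn.differentiableAt_of_convexOn_comp_exp {f : ℝ → ℝ} {S T : Set ℝ} {a : ℝ}
    (hf : ConcaveOn ℝ S f) (hS : Real.exp a ∈ interior S)
    (hg : ConvexOn ℝ T (fun s => f (Real.exp s))) (hT : a ∈ interior T) :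
    DifferentiableAt ℝ f (Real.exp a) := by
  set x := Real.exp a
  set L := derivWithin f (Iio x) x
  set R := derivWithin f (Ioi x) x
  have hL : HasDerivWithinAt f L (Iio x) x := by
    simpa using (hf.neg.differentiableWithinAt_Iio_of_mem_interior hS).neg.hasDerivWithinAt
  have hR : HasDerivWithinAt f R (Ioi x) x := by
    simpa using (hf.neg.differentiableWithinAt_Ioi_of_mem_interior hS).neg.hasDerivWithinAt
  have hRL : R ≤ L := by
    simpa [derivWithin.neg] using hf.neg.leftDeriv_le_rightDeriv_of_mem_interior hS
  have hLR : L * x ≤ R * x := by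
    simpa [hL.comp_exp_Iio.derivWithin (uniqueDiffWithinAt_Iio a),
      hR.comp_exp_Ioi.derivWithin (uniqueDiffWithinAt_Ioi a)]
      using hg.leftDeriv_le_rightDeriv_of_mem_interior hT
  have hLR_eq : L = R := le_antisymm (le_of_mul_le_mul_right hLR (Real.exp_pos a)) hRL
  exact (hasDerivAt_of_hasDerivWithinAt_Iio_Ioi (hLR_eq ▸ hL) hR).differentiableAt

theorem ConvexOn.monotoneOn_mul_deriv_of_comp_exp {f : ℝ → ℝ}
    (hg : ConvexOn ℝ univ (fun s => f (Real.exp s)))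
    (hf : ∀ t ∈ Ioi (0 : ℝ), DifferentiableAt ℝ f t) :
    MonotoneOn (fun t => t * deriv f t) (Ioi 0) := by
  have hg' : ∀ s, HasDerivAt (fun s => f (Real.exp s)) (deriv f (Real.exp s) * Real.exp s) s :=
    fun s => (hf _ (Real.exp_pos s)).hasDerivAt.comp s (Real.hasDerivAt_exp s)
  intro t₁ (h₁ : 0 < t₁) t₂ (h₂ : 0 < t₂) h12
  have := hg.monotoneOn_deriv (fun s _ => (hg' s).differentiableAt) trivial trivial
    (Real.log_le_log h₁ h12)
  rwa [(hg' _).deriv, (hg' _).deriv, Real.exp_log h₁, Real.exp_log h₂, mul_comm,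
    mul_comm (deriv f t₂)] at this

theorem continuousOn_Ioi_of_antitoneOn_of_monotoneOn_mul {g : ℝ → ℝ}
    (hanti : AntitoneOn g (Ioi 0)) (hmono : MonotoneOn (fun t => t * g t) (Ioi 0)) :
    ContinuousOn g (Ioi 0) := by
  intro t₀ (ht₀ : 0 < t₀)
  set h : ℝ → ℝ := fun t => t₀ * g t₀ / t
  have hh : ContinuousAt h t₀ := continuousAt_const.div continuousAt_id ht₀.ne'
  have hht₀ : h t₀ = g t₀ := mul_div_cancel_left₀ _ ht₀.ne'
  have hbound : ∀ t ∈ Ioi (0 : ℝ), g t ∈ uIcc (g t₀) (h t) := by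
    intro t (ht : 0 < t)
    rcases le_total t t₀ with htt₀ | ht₀t
    · refine Icc_subset_uIcc ⟨hanti ht ht₀ htt₀, ?_⟩
      rw [le_div_iff₀ ht, mul_comm]
      exact hmono ht ht₀ htt₀
    · refine Icc_subset_uIcc' ⟨?_, hanti ht₀ ht ht₀t⟩
      rw [div_le_iff₀ ht, mul_comm (g t)]
      exact hmono ht₀ ht ht₀t
  have hlow : ContinuousAt (fun t => min (g t₀) (h t)) t₀ := continuousAt_const.min hh
  have hhigh : ContinuousAt (fun t => max (g t₀) (h t)) t₀ := continuousAt_const.max hh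
  rw [ContinuousAt, hht₀, min_self] at hlow
  rw [ContinuousAt, hht₀, max_self] at hhigh
  exact tendsto_of_tendsto_of_tendsto_of_le_of_le' (hlow.mono_left nhdsWithin_le_nhds)
    (hhigh.mono_left nhdsWithin_le_nhds)
    (eventually_nhdsWithin_of_forall fun t ht => (hbound t ht).1)
    (eventually_nhdsWithin_of_forall fun t ht => (hbound t ht).2)

theorem stmt9_general (ω : ℝ → ℝ)
    (hconc : ConcaveOn ℝ (Ici 0) ω)
    (hconv : ConvexOn ℝ univ (fun t => ω (Real.exp t))) :
    (∀ t ∈ Ioi (0:ℝ), DifferentiableAt ℝ ω t) ∧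
    ContinuousOn (deriv ω) (Ioi 0) := by
  have hdiff : ∀ t ∈ Ioi (0:ℝ), DifferentiableAt ℝ ω t := by
    intro t (ht : 0 < t)
    rw [← Real.exp_log ht]
    exact hconc.differentiableAt_of_convexOn_comp_exp (by simp [Real.exp_pos]) hconv (by simp)
  refine ⟨hdiff, continuousOn_Ioi_of_antitoneOn_of_monotoneOn_mul ?_ ?_⟩
  · exact (hconc.subset Ioi_subset_Ici_self (convex_Ioi 0)).antitoneOn_deriv hdiff
  · exact hconv.monotoneOn_mul_deriv_of_comp_exp hdiff

theorem stmt9 (ω : ℝ → ℝ) (hpos : ∀ t ≥ (0:ℝ), 0 ≤ ω t)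
    (hconc : ConcaveOn ℝ (Ici 0) ω) (h0 : ω 0 = 0)
    (hconv : ConvexOn ℝ univ (fun t => ω (Real.exp t))) :
    (∀ t ∈ Ioi (0:ℝ), DifferentiableAt ℝ ω t) ∧
    ContinuousOn (deriv ω) (Ioi 0) :=
  stmt9_general ω hconc hconv
end

section
/- Let ω : [0,∞) → [0,∞) be concave, increasing, and differentiable, and let x < y. Suppose ω'(y) = ((n−1)/n)·ω'(x) for an integer n ≥ 2. Then there exists z ∈ [x, y] such that ω(y) − ω(z) = (n−1)·(ω(x) + (y−x)·ω'(x) − ω(y)). -/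
open Set

theorem exists_mem_Icc_sub_eq {α : Type*} [ConditionallyCompleteLinearOrder α]
    [TopologicalSpace α] [OrderTopology α] [DenselyOrdered α] {f : α → ℝ} {a b : α} {t : ℝ}
    (hab : a ≤ b) (hf : ContinuousOn f (Icc a b)) (ht : t ∈ Icc 0 (f b - f a)) :
    ∃ z ∈ Icc a b, f b - f z = t :=
  intermediate_value_Icc' hab (continuousOn_const.sub hf) <| by
    simpa only [Pi.sub_apply, sub_self] using ht

namespace ConcaveOn

variable {S : Set ℝ} {f : ℝ → ℝ} {x y : ℝ}

/-- The tangent gap is `(y - x) (f'(x) - s)` for the secant slope `s`, and `f'(y) ≤ s ≤ f'(x)`. -/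
theorem mul_tangent_gap_mem_Icc (hf : ConcaveOn ℝ S f) (hx : x ∈ S) (hy : y ∈ S) (hxy : x < y)
    (hfx : DifferentiableAt ℝ f x) (hfy : DifferentiableAt ℝ f y) {c : ℝ} (hc : 0 ≤ c)
    (hderiv : c * deriv f x ≤ (c + 1) * deriv f y) :
    c * (f x + (y - x) * deriv f x - f y) ∈ Icc 0 (f y - f x) := by
  have hsecant_le : slope f x y ≤ deriv f x := hf.slope_le_deriv hx hy hxy hfx
  have hle_secant : deriv f y ≤ slope f x y := hf.deriv_le_slope hx hy hxy hfy
  have hincr : f y - f x = (y - x) * slope f x y := (sub_smul_slope f x y).symm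
  have hgap : f x + (y - x) * deriv f x - f y = (y - x) * (deriv f x - slope f x y) := by
    linarith
  have hyx : 0 ≤ y - x := (sub_pos.2 hxy).le
  rw [hgap, hincr]
  constructor
  · exact mul_nonneg hc (mul_nonneg hyx (sub_nonneg.2 hsecant_le))
  · have : c * deriv f x ≤ (c + 1) * slope f x y := hderiv.trans (by gcongr)
    linear_combination mul_le_mul_of_nonneg_left this hyx

end ConcaveOn

theorem stmt11_general (ω : ℝ → ℝ)
    (hconc : ConcaveOn ℝ (Ici 0) ω)
    (hdiff : ∀ t ∈ Ici (0:ℝ), DifferentiableAt ℝ ω t)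
    (n : ℕ) (hn : 2 ≤ n) (x y : ℝ) (hx : 0 ≤ x) (hxy : x < y)
    (hderiv : deriv ω y = ((n - 1 : ℝ) / n) * deriv ω x) :
    ∃ z ∈ Icc x y,
      ω y - ω z = (n - 1 : ℝ) * (ω x + (y - x) * deriv ω x - ω y) := by
  have hIcc : Icc x y ⊆ Ici 0 := fun t ht => hx.trans ht.1
  have hy : y ∈ Ici (0:ℝ) := hIcc (right_mem_Icc.2 hxy.le)
  have hn' : (2:ℝ) ≤ n := by exact_mod_cast hn
  have hn0 : (n:ℝ) ≠ 0 := (zero_lt_two.trans_le hn').ne'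
  have hcont : ContinuousOn ω (Icc x y) :=
    fun t ht => (hdiff t (hIcc ht)).continuousAt.continuousWithinAt
  refine exists_mem_Icc_sub_eq hxy.le hcont <|
    hconc.mul_tangent_gap_mem_Icc hx hy hxy (hdiff x hx) (hdiff y hy) (by linarith) ?_
  rw [hderiv, sub_add_cancel, ← mul_assoc, mul_div_cancel₀ _ hn0]

theorem stmt11 (ω : ℝ → ℝ) (hpos : ∀ t ≥ (0:ℝ), 0 ≤ ω t)
    (hconc : ConcaveOn ℝ (Ici 0) ω) (hmono : MonotoneOn ω (Ici 0))
    (hdiff : ∀ t ∈ Ici (0:ℝ), DifferentiableAt ℝ ω t)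
    (n : ℕ) (hn : 2 ≤ n) (x y : ℝ) (hx : 0 ≤ x) (hxy : x < y)
    (hderiv : deriv ω y = ((n - 1 : ℝ) / n) * deriv ω x) :
    ∃ z ∈ Icc x y,
      ω y - ω z = (n - 1 : ℝ) * (ω x + (y - x) * deriv ω x - ω y) :=
  stmt11_general ω hconc hdiff n hn x y hx hxy hderiv
end

section
/- Let σ : [0,∞) → [0,∞) be a function and (xₙ) a strictly increasing sequence with x₁ = 0 and, for all n ≥ 2: σ(xₙ) ≥ 2^{n−i}·σ(xᵢ) for 1 ≤ i ≤ n−1, and 2·x_{n} ≤ x_{n+1} for all n. Define σ̃(t) := n·σ(t) − ∑_{i=1}^{n} σ(xᵢ) for t ∈ [xₙ, x_{n+1}). Then for all n ≥ 2 and t ∈ [xₙ, x_{n+1}): (n−2)·σ(t) ≤ σ̃(t) ≤ n·σ(t). In particular σ(t) = o(σ̃(t)) as t → ∞ if σ(t) → ∞. -/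
open Set Filter

/- The partial sums of a sequence that at least doubles at each step are dominated by twice the
last term, since then `∑_{i ≤ n} σ(xᵢ) ≤ ∑_{i ≤ n} 2^{i-n} σ(xₙ) ≤ 2 σ(xₙ)`. Both bounds on
`σ̃(t)` follow from this, from `0 ≤ σ(xᵢ)` and from `σ(xₙ) ≤ σ(t)`. -/

theorem Finset.sum_Icc_le_two_mul_of_two_mul_le {R : Type*} [Semiring R] [PartialOrder R]
    [IsOrderedRing R] {a : ℕ → R} {m : ℕ} (hm : 0 ≤ a m)
    (hdouble : ∀ k, m ≤ k → 2 * a k ≤ a (k + 1)) :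
    ∀ n, m ≤ n → ∑ i ∈ Finset.Icc m n, a i ≤ 2 * a n := by
  intro n hn
  induction n, hn using Nat.le_induction with
  | base => simpa [two_mul] using le_add_of_nonneg_right hm
  | succ k hk ih =>
    rw [Finset.sum_Icc_succ_top (by omega), two_mul (a (k + 1))]
    exact add_le_add_left (ih.trans (hdouble k hk)) _

theorem stmt18_general (σ : ℝ → ℝ) (hmono : MonotoneOn σ (Ici 0))
    (hpos : ∀ t ≥ (0:ℝ), 0 ≤ σ t)
    (x : ℕ → ℝ) (hsm : StrictMono x) (hx1 : x 1 = 0)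
    (hdom : ∀ n : ℕ, 2 ≤ n → ∀ i : ℕ, 1 ≤ i → i ≤ n - 1 →
        (2:ℝ) ^ (n - i) * σ (x i) ≤ σ (x n)) :
    ∀ n : ℕ, 2 ≤ n → ∀ t : ℝ, x n ≤ t → t < x (n + 1) →
      (n - 2 : ℝ) * σ t ≤ (n : ℝ) * σ t - ∑ i ∈ Finset.Icc 1 n, σ (x i) ∧
      (n : ℝ) * σ t - ∑ i ∈ Finset.Icc 1 n, σ (x i) ≤ (n : ℝ) * σ t := by
  intro n hn t hxt _
  have hx_nonneg : ∀ i, 1 ≤ i → 0 ≤ x i := fun i hi => hx1 ▸ hsm.monotone hi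
  have hdouble : ∀ k, 1 ≤ k → 2 * σ (x k) ≤ σ (x (k + 1)) := fun k hk => by
    simpa using hdom (k + 1) (by omega) k hk (by omega)
  have hsum_nonneg : 0 ≤ ∑ i ∈ Finset.Icc 1 n, σ (x i) :=
    Finset.sum_nonneg fun i hi => hpos _ (hx_nonneg i (Finset.mem_Icc.mp hi).1)
  have hsum_le : ∑ i ∈ Finset.Icc 1 n, σ (x i) ≤ 2 * σ (x n) :=
    Finset.sum_Icc_le_two_mul_of_two_mul_le (hpos _ (hx_nonneg 1 le_rfl)) hdouble n (by omega)
  have hσ_le : σ (x n) ≤ σ t :=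
    hmono (hx_nonneg n (by omega)) ((hx_nonneg n (by omega)).trans hxt) hxt
  constructor <;> linarith

theorem stmt18 (σ : ℝ → ℝ) (hmono : MonotoneOn σ (Ici 0))
    (hpos : ∀ t ≥ (0:ℝ), 0 ≤ σ t)
    (x : ℕ → ℝ) (hsm : StrictMono x) (hx1 : x 1 = 0)
    (hgeom : ∀ n : ℕ, 1 ≤ n → 2 * x n ≤ x (n + 1))
    (hdom : ∀ n : ℕ, 2 ≤ n → ∀ i : ℕ, 1 ≤ i → i ≤ n - 1 →
        (2:ℝ) ^ (n - i) * σ (x i) ≤ σ (x n)) :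
    ∀ n : ℕ, 2 ≤ n → ∀ t : ℝ, x n ≤ t → t < x (n + 1) →
      (n - 2 : ℝ) * σ t ≤ (n : ℝ) * σ t - ∑ i ∈ Finset.Icc 1 n, σ (x i) ∧
      (n : ℝ) * σ t - ∑ i ∈ Finset.Icc 1 n, σ (x i) ≤ (n : ℝ) * σ t :=
  stmt18_general σ hmono hpos x hsm hx1 hdom
end

section
/- Let σ : [0,∞) → [0,∞) be increasing with ∫_{xₙ}^∞ σ(t)/(1+t²) dt ≤ 1/n³ for a sequence (xₙ), and define σ̃(t) := n·σ(t) − ∑_{i=1}^n σ(xᵢ) ≤ n·σ(t) for t ∈ [xₙ, x_{n+1}). Then ∫_{x₂}^∞ σ̃(t)/(1+t²) dt ≤ ∑_{n=2}^∞ 1/n² < ∞, i.e., σ̃ is non-quasianalytic. -/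
open MeasureTheory Set Filter

theorem stmt19 (σ : ℝ → ℝ) (hmono : MonotoneOn σ (Ici 0))
    (hpos : ∀ t ≥ (0:ℝ), 0 ≤ σ t)
    (x : ℕ → ℝ) (hsm : StrictMono x) (hx0 : 0 ≤ x 1)
    (hxtop : Tendsto x atTop atTop)
    (hσint : IntegrableOn (fun t => σ t / (1 + t ^ 2)) (Ioi (x 1)))
    (hint : ∀ n : ℕ, 1 ≤ n →
        ∫ t in Ioi (x n), σ t / (1 + t ^ 2) ≤ 1 / (n : ℝ) ^ 3)
    (σ' : ℝ → ℝ) (hσ'meas : Measurable σ')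
    (hσ'pos : ∀ t, 0 ≤ σ' t)
    (hσ'le : ∀ n : ℕ, 2 ≤ n → ∀ t ∈ Ico (x n) (x (n + 1)), σ' t ≤ (n : ℝ) * σ t) :
    IntegrableOn (fun t => σ' t / (1 + t ^ 2)) (Ioi (x 2)) ∧
    ∫ t in Ioi (x 2), σ' t / (1 + t ^ 2) ≤ ∑' n : ℕ, 1 / ((n : ℝ) + 2) ^ 2 := by
  classical
  set f : ℝ → ℝ := fun t => σ' t / (1 + t ^ 2) with hf
  have hfm : Measurable f := hσ'meas.div (measurable_const.add (measurable_id.pow_const 2))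
  have hfnn : ∀ t, 0 ≤ f t := fun t => div_nonneg (hσ'pos t) (by positivity)
  -- covering
  have hcover : Ioi (x 2) ⊆ ⋃ k : ℕ, Ico (x (k + 2)) (x (k + 3)) := by
    intro t ht
    have hex : ∃ n, t < x n := (hxtop.eventually_gt_atTop t).exists
    set n := Nat.find hex with hndef
    have hn : t < x n := Nat.find_spec hex
    have hn3 : 3 ≤ n := by
      by_contra h
      push_neg at h
      have : x n ≤ x 2 := hsm.monotone (by omega)
      exact absurd (lt_of_lt_of_le hn this) (not_lt.2 (le_of_lt ht))
    have hprev : x (n - 1) ≤ t := by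
      by_contra h
      push_neg at h
      exact Nat.find_min hex (by omega) h
    refine mem_iUnion.2 ⟨n - 3, ?_⟩
    have h1 : n - 3 + 2 = n - 1 := by omega
    have h2 : n - 3 + 3 = n := by omega
    rw [h1, h2]
    exact ⟨hprev, hn⟩
  -- piece estimate
  have key : ∀ k : ℕ, ∫⁻ t in Ico (x (k + 2)) (x (k + 3)), ENNReal.ofReal (f t)
      ≤ ENNReal.ofReal (1 / ((k : ℝ) + 2) ^ 2) := by
    intro k
    set n : ℕ := k + 2 with hn
    have hx1n : x 1 ≤ x n := hsm.monotone (by omega)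
    have hintn : IntegrableOn (fun t => σ t / (1 + t ^ 2)) (Ioi (x n)) :=
      hσint.mono_set (Ioi_subset_Ioi hx1n)
    have hnnσ : ∀ᵐ t ∂(volume.restrict (Ioi (x n))), 0 ≤ σ t / (1 + t ^ 2) := by
      filter_upwards [ae_restrict_mem measurableSet_Ioi] with t ht
      have ht0 : (0:ℝ) ≤ t := le_trans (le_trans hx0 hx1n) (le_of_lt ht)
      exact div_nonneg (hpos t ht0) (by positivity)
    have step1 : ∫⁻ t in Ico (x (k + 2)) (x (k + 3)), ENNReal.ofReal (f t)
        ≤ ∫⁻ t in Ico (x n) (x (n + 1)), ENNReal.ofReal ((n : ℝ) * (σ t / (1 + t ^ 2))) := by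
      have h3 : k + 3 = n + 1 := by omega
      rw [h3]
      refine lintegral_mono_ae ?_
      filter_upwards [ae_restrict_mem measurableSet_Ico] with t ht
      apply ENNReal.ofReal_le_ofReal
      have h1t : (0:ℝ) < 1 + t ^ 2 := by positivity
      have hb := hσ'le n (by omega) t ht
      rw [hf]
      calc σ' t / (1 + t ^ 2) ≤ ((n : ℝ) * σ t) / (1 + t ^ 2) := by gcongr
        _ = (n : ℝ) * (σ t / (1 + t ^ 2)) := by ring
    have step2 : ∫⁻ t in Ico (x n) (x (n + 1)), ENNReal.ofReal ((n : ℝ) * (σ t / (1 + t ^ 2)))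
        ≤ ∫⁻ t in Ioi (x n), ENNReal.ofReal ((n : ℝ) * (σ t / (1 + t ^ 2))) := by
      rw [restrict_Ioi_eq_restrict_Ici]
      exact lintegral_mono_set Ico_subset_Ici_self
    have step3 : ∫⁻ t in Ioi (x n), ENNReal.ofReal ((n : ℝ) * (σ t / (1 + t ^ 2)))
        = ENNReal.ofReal (n : ℝ) * ∫⁻ t in Ioi (x n), ENNReal.ofReal (σ t / (1 + t ^ 2)) := by
      rw [← lintegral_const_mul' _ _ ENNReal.ofReal_ne_top]
      refine lintegral_congr fun t => ?_
      rw [ENNReal.ofReal_mul (by positivity)]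
    have step4 : ∫⁻ t in Ioi (x n), ENNReal.ofReal (σ t / (1 + t ^ 2))
        = ENNReal.ofReal (∫ t in Ioi (x n), σ t / (1 + t ^ 2)) :=
      (ofReal_integral_eq_lintegral_ofReal hintn hnnσ).symm
    calc ∫⁻ t in Ico (x (k + 2)) (x (k + 3)), ENNReal.ofReal (f t)
        ≤ ENNReal.ofReal (n : ℝ) * ENNReal.ofReal (∫ t in Ioi (x n), σ t / (1 + t ^ 2)) := by
          rw [← step4, ← step3]
          exact le_trans step1 step2
      _ ≤ ENNReal.ofReal (n : ℝ) * ENNReal.ofReal (1 / (n : ℝ) ^ 3) := by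
          gcongr
          exact hint n (by omega)
      _ = ENNReal.ofReal ((n : ℝ) * (1 / (n : ℝ) ^ 3)) := by
          rw [ENNReal.ofReal_mul (by positivity)]
      _ = ENNReal.ofReal (1 / ((k : ℝ) + 2) ^ 2) := by
          congr 1
          have hnne : ((n : ℕ) : ℝ) = (k : ℝ) + 2 := by push_cast [hn]; ring
          rw [hnne]
          have : ((k : ℝ) + 2) ≠ 0 := by positivity
          field_simp
  -- summability
  have hsum : Summable (fun k : ℕ => 1 / ((k : ℝ) + 2) ^ 2) := by
    have h0 : Summable (fun n : ℕ => 1 / (n : ℝ) ^ 2) :=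
      Real.summable_one_div_nat_pow.2 (by norm_num)
    have := (summable_nat_add_iff 2).2 h0
    refine this.congr fun k => ?_
    push_cast
    ring_nf
  have hsnn : ∀ k : ℕ, (0:ℝ) ≤ 1 / ((k : ℝ) + 2) ^ 2 := fun k => by positivity
  -- total lintegral bound
  have htot : ∫⁻ t in Ioi (x 2), ENNReal.ofReal (f t)
      ≤ ENNReal.ofReal (∑' k : ℕ, 1 / ((k : ℝ) + 2) ^ 2) := by
    calc ∫⁻ t in Ioi (x 2), ENNReal.ofReal (f t)
        ≤ ∫⁻ t in ⋃ k : ℕ, Ico (x (k + 2)) (x (k + 3)), ENNReal.ofReal (f t) :=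
          lintegral_mono_set hcover
      _ ≤ ∑' k : ℕ, ∫⁻ t in Ico (x (k + 2)) (x (k + 3)), ENNReal.ofReal (f t) :=
          lintegral_iUnion_le _ _
      _ ≤ ∑' k : ℕ, ENNReal.ofReal (1 / ((k : ℝ) + 2) ^ 2) := ENNReal.tsum_le_tsum key
      _ = ENNReal.ofReal (∑' k : ℕ, 1 / ((k : ℝ) + 2) ^ 2) :=
          (ENNReal.ofReal_tsum_of_nonneg hsnn hsum).symm
  have hIntegrable : IntegrableOn f (Ioi (x 2)) := by
    refine ⟨hfm.aestronglyMeasurable, ?_⟩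
    rw [hasFiniteIntegral_iff_ofReal (Eventually.of_forall hfnn)]
    exact lt_of_le_of_lt htot ENNReal.ofReal_lt_top
  refine ⟨hIntegrable, ?_⟩
  have := ofReal_integral_eq_lintegral_ofReal hIntegrable (Eventually.of_forall hfnn)
  rw [← ENNReal.ofReal_le_ofReal_iff (tsum_nonneg hsnn), this]
  exact htot
end
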